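/- arXiv:1104.2227 — 5 statements merged into one kernel-verified Lean document; each statement's English description precedes it below -/
import Mathlib

section
/- Let G be a group, H ≤ G a subgroup, and f ∈ G an element such that the subgroups H, fHf⁻¹, f²Hf⁻², ..., f^mHf^{-m} pairwise commute for every m ≥ 1. Then every element of the commutator subgroup [H,H] is a product of at most 2 commutators of elements of G. -/
/-!
Let `N` be the subgroup generated by the conjugates `fⁱ H f⁻ⁱ`, `i ≥ 1`; it centralizes `H` and
contains `f H f⁻¹` and `f N f⁻¹`. Every `g ∈ ⁅H, H⁆` can then be written `g = ⁅Q, f⁆ * ⁅A, B⁆` with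
`A, B ∈ N`, by induction on the number of commutators: if `g = ⁅Q, f⁆ * ⁅A, B⁆` and `a, b ∈ H`, then
`⁅a, b⁆ * g = ⁅⁅a, b⁆ * g * f Q f⁻¹, f⁆ * ⁅f (a A) f⁻¹, f (b B) f⁻¹⁆`. Unfolded, `A` and `B` are the
products `∏ fⁱ aᵢ f⁻ⁱ` and `∏ fⁱ bᵢ f⁻ⁱ`, whose commutator is `∏ fⁱ ⁅aᵢ, bᵢ⁆ f⁻ⁱ`, and the
commutator with `f` absorbs the telescoping error.
-/

open scoped commutatorElement

open Subgroup

section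

variable {G : Type*} [Group G]

theorem commutatorElement_mul_mul_of_commute {x y z w : G} (hxz : Commute x z)
    (hxw : Commute x w) (hyz : Commute y z) (hyw : Commute y w) :
    ⁅x * z, y * w⁆ = ⁅x, y⁆ * ⁅z, w⁆ := by
  have hz : Commute (y * x) z := hyz.mul_left hxz
  have hw : Commute (y * x) w := hyw.mul_left hxw
  have hzw : Commute (y * x) ⁅z, w⁆ :=
    ((hz.mul_right hw).mul_right hz.inv_right).mul_right hw.inv_right
  calc ⁅x * z, y * w⁆ = x * (z * y) * w * z⁻¹ * (x⁻¹ * w⁻¹) * y⁻¹ := by group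
    _ = ⁅x, y⁆ * ((y * x) * ⁅z, w⁆ * (y * x)⁻¹) := by
      rw [← hyz.eq, hxw.inv_inv.eq, commutatorElement_def, commutatorElement_def]; group
    _ = ⁅x, y⁆ * ⁅z, w⁆ := by rw [hzw.mul_inv_cancel]

section

variable {H N : Subgroup G} {f : G}

theorem commutatorElement_mul_eq_of_le_centralizer (hc : N ≤ centralizer H) {a b g Q A B : G}
    (ha : a ∈ H) (hb : b ∈ H) (hg : g ∈ H) (hA : A ∈ N) (hB : B ∈ N)
    (hgQ : g = ⁅Q, f⁆ * ⁅A, B⁆) :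
    ⁅a, b⁆ * g = ⁅⁅a, b⁆ * g * (f * Q * f⁻¹), f⁆ *
      ⁅f * a * f⁻¹ * (f * A * f⁻¹), f * b * f⁻¹ * (f * B * f⁻¹)⁆ := by
  have comm : ∀ h ∈ H, ∀ n ∈ N, Commute h n := fun h hh n hn =>
    mem_centralizer_iff.1 (hc hn) h hh
  have hgAB : Commute g ⁅A, B⁆ :=
    comm g hg _ (N.commutator_le_self (commutator_mem_commutator hA hB))
  have hQ : ⁅Q, f⁆ = g * ⁅A, B⁆⁻¹ := eq_mul_inv_of_mul_eq hgQ.symm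
  rw [commutatorElement_mul_mul_of_commute ((comm a ha A hA).conj f) ((comm a ha B hB).conj f)
    ((comm b hb A hA).conj f) ((comm b hb B hB).conj f), ← conjugate_commutatorElement,
    ← conjugate_commutatorElement]
  -- `⁅x * (f * Q * f⁻¹), f⁆ = x * f * ⁅Q, f⁆ * x⁻¹ * f⁻¹`, and `⁅Q, f⁆ * g⁻¹ = g * ⁅A, B⁆⁻¹ * g⁻¹`.
  calc ⁅a, b⁆ * g
      = ⁅a, b⁆ * g * f * (g * ⁅A, B⁆⁻¹ * g⁻¹) * ⁅a, b⁆⁻¹ * f⁻¹ * (f * ⁅a, b⁆ * f⁻¹) *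
          (f * ⁅A, B⁆ * f⁻¹) := by
        rw [hgAB.inv_right.mul_inv_cancel]; group
    _ = ⁅⁅a, b⁆ * g * (f * Q * f⁻¹), f⁆ * (f * ⁅a, b⁆ * f⁻¹ * (f * ⁅A, B⁆ * f⁻¹)) := by
        rw [← hQ, commutatorElement_def Q, commutatorElement_def _ f]; group

theorem exists_eq_commutatorElement_mul_commutatorElement (hH : ∀ a ∈ H, f * a * f⁻¹ ∈ N)
    (hN : ∀ n ∈ N, f * n * f⁻¹ ∈ N) (hc : N ≤ centralizer H) {g : G} (hg : g ∈ ⁅H, H⁆) :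
    ∃ Q : G, ∃ A ∈ N, ∃ B ∈ N, g = ⁅Q, f⁆ * ⁅A, B⁆ := by
  have step : ∀ a ∈ H, ∀ b ∈ H, ∀ g ∈ H, (∃ Q : G, ∃ A ∈ N, ∃ B ∈ N, g = ⁅Q, f⁆ * ⁅A, B⁆) →
      ∃ Q : G, ∃ A ∈ N, ∃ B ∈ N, ⁅a, b⁆ * g = ⁅Q, f⁆ * ⁅A, B⁆ := by
    rintro a ha b hb g hg ⟨Q, A, hA, B, hB, hgQ⟩
    exact ⟨_, _, mul_mem (hH a ha) (hN A hA), _, mul_mem (hH b hb) (hN B hB),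
      commutatorElement_mul_eq_of_le_centralizer hc ha hb hg hA hB hgQ⟩
  rw [Subgroup.commutator_def] at hg
  induction hg using closure_induction_left with
  | one => exact ⟨1, 1, one_mem N, 1, one_mem N, by simp⟩
  | mul_left x hx y hy ih =>
    obtain ⟨a, ha, b, hb, rfl⟩ := hx
    exact step a ha b hb y (H.commutator_le_self (by rwa [Subgroup.commutator_def])) ih
  | inv_mul_cancel x hx y hy ih =>
    obtain ⟨a, ha, b, hb, rfl⟩ := hx
    rw [commutatorElement_inv]
    exact step b hb a ha y (H.commutator_le_self (by rwa [Subgroup.commutator_def])) ih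

end

section

variable (H : Subgroup G) (f : G)

def conjPowSuccClosure : Subgroup G :=
  closure {x | ∃ i : ℕ, ∃ h ∈ H, x = f ^ (i + 1) * h * (f ^ (i + 1))⁻¹}

variable {H f}

theorem conj_mem_conjPowSuccClosure_of_mem {a : G} (ha : a ∈ H) :
    f * a * f⁻¹ ∈ conjPowSuccClosure H f :=
  subset_closure ⟨0, a, ha, by simp⟩

theorem conj_mem_conjPowSuccClosure {n : G} (hn : n ∈ conjPowSuccClosure H f) :
    f * n * f⁻¹ ∈ conjPowSuccClosure H f := by
  have hle : conjPowSuccClosure H f ≤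
      (conjPowSuccClosure H f).comap (MulAut.conj f).toMonoidHom := by
    refine closure_le _ |>.2 ?_
    rintro _ ⟨i, h, hh, rfl⟩
    refine subset_closure ⟨i + 1, h, hh, ?_⟩
    simp only [MulEquiv.coe_toMonoidHom, MulAut.conj_apply, pow_succ' f (i + 1)]
    group
  exact hle hn

theorem conjPowSuccClosure_le_centralizer
    (hcomm : ∀ i : ℕ, ∀ a ∈ H, ∀ b ∈ H, Commute a (f ^ (i + 1) * b * (f ^ (i + 1))⁻¹)) :
    conjPowSuccClosure H f ≤ centralizer H := by
  refine closure_le _ |>.2 ?_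
  rintro _ ⟨i, b, hb, rfl⟩
  exact mem_centralizer_iff.2 fun a ha => hcomm i a ha b hb

end

end

theorem commutator_of_displaceable_is_two_commutators {G : Type*} [Group G]
    (H : Subgroup G) (f : G)
    (hdisp : ∀ m : ℕ, 1 ≤ m → ∀ i j : ℕ, i ≤ m → j ≤ m → i ≠ j →
      ∀ a b : G, a ∈ H → b ∈ H →
        Commute (f ^ i * a * (f ^ i)⁻¹) (f ^ j * b * (f ^ j)⁻¹)) :
    ∀ g ∈ ⁅H, H⁆, ∃ a b c d : G, g = ⁅a, b⁆ * ⁅c, d⁆ := by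
  have hcomm : ∀ i : ℕ, ∀ a ∈ H, ∀ b ∈ H, Commute a (f ^ (i + 1) * b * (f ^ (i + 1))⁻¹) :=
    fun i a ha b hb => by
      simpa using hdisp (i + 1) (by omega) 0 (i + 1) (by omega) le_rfl (by omega) a b ha hb
  intro g hg
  obtain ⟨Q, A, -, B, -, rfl⟩ := exists_eq_commutatorElement_mul_commutatorElement
    (fun _ => conj_mem_conjPowSuccClosure_of_mem) (fun _ => conj_mem_conjPowSuccClosure)
    (conjPowSuccClosure_le_centralizer hcomm) hg
  exact ⟨Q, f, A, B, rfl⟩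
end

section
/- Let G be a group with a conjugation-invariant norm ν, H ≤ G a subgroup, and g ∈ G an element that strongly m-displaces H for every m ≥ 1 (i.e., H, gHg⁻¹, ..., g^mHg^{-m} pairwise commute). Then ν(h) ≤ 14ν(g) for all h in the commutator subgroup [H,H]. -/
/-- A conjugation-invariant norm on a group `G`. -/
def IsConjInvariantNorm {G : Type*} [Group G] (ν : G → ℝ) : Prop :=
  (∀ g, 0 ≤ ν g) ∧ (∀ g : G, 0 < ν g ↔ g ≠ 1) ∧ (∀ g : G, ν g⁻¹ = ν g) ∧
    (∀ g h : G, ν (g * h) ≤ ν g + ν h) ∧ (∀ g h : G, ν (h * g * h⁻¹) = ν g)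

/-!
Write `h ∈ ⁅H, H⁆` as `∏ₖ ⁅aₖ, bₖ⁆` with `aₖ, bₖ ∈ H` and put `s = g²`. Because the conjugates
`gⁱ H g⁻ⁱ` pairwise commute, `A = ∏ₖ sᵏ aₖ s⁻ᵏ` and `B = ∏ₖ sᵏ bₖ s⁻ᵏ` satisfy
`⁅A, B⁆ = ∏ₖ sᵏ ⁅aₖ, bₖ⁆ s⁻ᵏ`, and a telescoping product shows that this differs from `h` by a
single commutator `⁅u, s⁆`. Moreover `B` commutes with `g A g⁻¹` (odd shifts never meet even
ones), so `⁅A, B⁆ = ⁅⁅A, g⁆, B⁆`. As `ν ⁅x, y⁆ ≤ 2 min (ν x) (ν y)`, this gives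
`ν h ≤ 4 ν g + 4 ν g`.
-/

open scoped commutatorElement

section

variable {G : Type*} [Group G]

theorem commutatorElement_mul_mul_of_commute_s6 {a b P Q : G} (haP : Commute a P)
    (haQ : Commute a Q) (hbP : Commute b P) (hbQ : Commute b Q) :
    ⁅a * P, b * Q⁆ = ⁅a, b⁆ * ⁅P, Q⁆ := by
  have hPQ : ∀ x, Commute x P → Commute x Q → Commute x ⁅P, Q⁆ := fun x hP hQ => by
    rw [commutatorElement_def]
    exact ((hP.mul_right hQ).mul_right hP.inv_right).mul_right hQ.inv_right
  calc ⁅a * P, b * Q⁆ = a * b * (⁅P, Q⁆ * a⁻¹) * b⁻¹ := by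
        simp only [commutatorElement_def, mul_inv_rev, mul_assoc, hbP.symm.left_comm,
          haQ.inv_inv.left_comm]
    _ = a * b * a⁻¹ * (⁅P, Q⁆ * b⁻¹) := by
        rw [← (hPQ a haP haQ).inv_left.eq]
        simp only [mul_assoc]
    _ = ⁅a, b⁆ * ⁅P, Q⁆ := by
        rw [← (hPQ b hbP hbQ).inv_left.eq]
        simp only [commutatorElement_def a b, mul_assoc]

theorem commutatorElement_mul_inv_of_commute (x : G) {y z : G} (h : Commute z y) :
    ⁅x * z⁻¹, y⁆ = ⁅x, y⁆ := by
  simp only [commutatorElement_def, mul_inv_rev, inv_inv, mul_assoc]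
  rw [← mul_assoc z⁻¹, ← mul_assoc (z⁻¹ * y), h.inv_mul_cancel]

theorem Subgroup.exists_list_of_mem_commutator {H : Subgroup G} {x : G}
    (hx : x ∈ ⁅H, H⁆) : ∃ l : List (G × G), (∀ p ∈ l, p.1 ∈ H ∧ p.2 ∈ H) ∧
      (l.map fun p => ⁅p.1, p.2⁆).prod = x := by
  rw [Subgroup.commutator_def] at hx
  induction hx using Subgroup.closure_induction with
  | mem x hx =>
    obtain ⟨a, ha, b, hb, rfl⟩ := hx
    exact ⟨[(a, b)], by simp [ha, hb], by simp⟩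
  | one => exact ⟨[], by simp, rfl⟩
  | mul x y _ _ hx hy =>
    obtain ⟨l₁, hl₁, rfl⟩ := hx
    obtain ⟨l₂, hl₂, rfl⟩ := hy
    exact ⟨l₁ ++ l₂, fun p hp => (List.mem_append.mp hp).elim (hl₁ p) (hl₂ p), by simp⟩
  | inv x _ hx =>
    obtain ⟨l, hl, rfl⟩ := hx
    refine ⟨(l.map Prod.swap).reverse, fun p hp => ?_, ?_⟩
    · obtain ⟨q, hq, rfl⟩ := List.mem_map.mp (List.mem_reverse.mp hp)
      exact (hl q hq).symm
    · simp [List.prod_inv_reverse, Function.comp_def, commutatorElement_inv]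

/-- For `φ` the conjugation by `g`, this says that `g` strongly `m`-displaces `H` for every `m`. -/
def StronglyDisplaces (φ : Monoid.End G) (H : Subgroup G) : Prop :=
  ∀ i j : ℕ, i ≠ j → ∀ a ∈ H, ∀ b ∈ H, Commute ((φ ^ i) a) ((φ ^ j) b)

/-- `twistedProd ψ [a₀, a₁, a₂, …] = a₀ * ψ a₁ * ψ² a₂ * ⋯` -/
def twistedProd (ψ : Monoid.End G) : List G → G
  | [] => 1
  | a :: l => a * ψ (twistedProd ψ l)

/-- `telescope ψ [a₀, a₁, …] = (a₀ a₁ ⋯) * ψ (a₁ a₂ ⋯) * ψ² (a₂ ⋯) * ⋯` -/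
def telescope (ψ : Monoid.End G) : List G → G
  | [] => 1
  | a :: l => (a :: l).prod * ψ (telescope ψ l)

theorem telescope_eq_prod_mul (ψ : Monoid.End G) (l : List G) :
    telescope ψ l = l.prod * ψ (telescope ψ l.tail) := by
  cases l <;> simp [telescope]

namespace StronglyDisplaces

variable {φ : Monoid.End G} {H : Subgroup G}

theorem commute_pow_twistedProd (hφ : StronglyDisplaces φ H) {a : G} (ha : a ∈ H)
    {m : List G} (hm : ∀ x ∈ m, x ∈ H) {i j : ℕ} (hij : ∀ k, i ≠ j + 2 * k) :
    Commute ((φ ^ i) a) ((φ ^ j) (twistedProd (φ ^ 2) m)) := by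
  induction m generalizing j with
  | nil => simp [twistedProd]
  | cons b m ih =>
    have hb : b ∈ H := hm b List.mem_cons_self
    rw [twistedProd, map_mul, ← Function.comp_apply (f := ⇑(φ ^ j)), ← Monoid.End.coe_mul,
      ← pow_add]
    exact (hφ i j (by simpa using hij 0) a ha b hb).mul_right
      (ih (fun x hx => hm x (List.mem_cons_of_mem b hx)) fun k => by
        have := hij (k + 1); omega)

theorem commute_pow_twistedProd_pow_twistedProd (hφ : StronglyDisplaces φ H)
    {m₁ m₂ : List G} (hm₁ : ∀ x ∈ m₁, x ∈ H) (hm₂ : ∀ x ∈ m₂, x ∈ H) {i j : ℕ}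
    (hij : Odd (i + j)) :
    Commute ((φ ^ i) (twistedProd (φ ^ 2) m₁)) ((φ ^ j) (twistedProd (φ ^ 2) m₂)) := by
  induction m₁ generalizing i with
  | nil => simp [twistedProd]
  | cons a m₁ ih =>
    rw [twistedProd, map_mul, ← Function.comp_apply (f := ⇑(φ ^ i)), ← Monoid.End.coe_mul,
      ← pow_add]
    obtain ⟨n, hn⟩ := hij
    refine Commute.mul_left ?_
      (ih (fun x hx => hm₁ x (List.mem_cons_of_mem a hx)) ⟨n + 1, by omega⟩)
    exact hφ.commute_pow_twistedProd (hm₁ a List.mem_cons_self) hm₂ fun k => by omega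

theorem commute_sq_twistedProd (hφ : StronglyDisplaces φ H) {a : G} (ha : a ∈ H)
    {m : List G} (hm : ∀ x ∈ m, x ∈ H) : Commute a ((φ ^ 2) (twistedProd (φ ^ 2) m)) := by
  simpa using hφ.commute_pow_twistedProd ha hm (i := 0) (j := 2) fun k => by omega

theorem commutatorElement_twistedProd (hφ : StronglyDisplaces φ H) (l : List (G × G))
    (hl : ∀ p ∈ l, p.1 ∈ H ∧ p.2 ∈ H) :
    ⁅twistedProd (φ ^ 2) (l.map Prod.fst), twistedProd (φ ^ 2) (l.map Prod.snd)⁆ =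
      twistedProd (φ ^ 2) (l.map fun p => ⁅p.1, p.2⁆) := by
  induction l with
  | nil => simp [twistedProd]
  | cons p l ih =>
    have hl' : ∀ q ∈ l, q.1 ∈ H ∧ q.2 ∈ H := fun q hq => hl q (List.mem_cons_of_mem p hq)
    have hfst : ∀ x ∈ l.map Prod.fst, x ∈ H := List.forall_mem_map.2 fun q hq => (hl' q hq).1
    have hsnd : ∀ x ∈ l.map Prod.snd, x ∈ H := List.forall_mem_map.2 fun q hq => (hl' q hq).2
    obtain ⟨h₁, h₂⟩ := hl p List.mem_cons_self
    simp only [List.map_cons, twistedProd]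
    rw [commutatorElement_mul_mul_of_commute_s6 (hφ.commute_sq_twistedProd h₁ hfst)
      (hφ.commute_sq_twistedProd h₁ hsnd) (hφ.commute_sq_twistedProd h₂ hfst)
      (hφ.commute_sq_twistedProd h₂ hsnd), ← map_commutatorElement, ih hl']

theorem telescope_eq_twistedProd_mul (hφ : StronglyDisplaces φ H) {l : List G}
    (hl : ∀ x ∈ l, x ∈ H) :
    telescope (φ ^ 2) l = twistedProd (φ ^ 2) l * telescope (φ ^ 2) l.tail := by
  induction l with
  | nil => simp [telescope, twistedProd]
  | cons a l ih =>
    have hl' : ∀ x ∈ l, x ∈ H := fun x hx => hl x (List.mem_cons_of_mem a hx)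
    have hprod : Commute l.prod ((φ ^ 2) (twistedProd (φ ^ 2) l)) :=
      hφ.commute_sq_twistedProd (H.list_prod_mem hl') hl'
    rw [telescope, ih hl', map_mul, List.prod_cons, twistedProd, List.tail_cons,
      telescope_eq_prod_mul (φ ^ 2) l]
    simp only [mul_assoc]
    rw [← mul_assoc l.prod, hprod.eq, mul_assoc]

theorem list_prod_eq_twistedProd_mul (hφ : StronglyDisplaces φ H) {l : List G}
    (hl : ∀ x ∈ l, x ∈ H) :
    ∃ u : G, l.prod = twistedProd (φ ^ 2) l * (u * ((φ ^ 2) u)⁻¹) := by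
  refine ⟨telescope (φ ^ 2) l.tail, ?_⟩
  rw [← mul_assoc, ← hφ.telescope_eq_twistedProd_mul hl, telescope_eq_prod_mul,
    mul_inv_cancel_right]

theorem exists_eq_commutatorElement_mul (hφ : StronglyDisplaces φ H) {x : G}
    (hx : x ∈ ⁅H, H⁆) :
    ∃ A B u : G, x = ⁅A * (φ A)⁻¹, B⁆ * (u * ((φ ^ 2) u)⁻¹) := by
  obtain ⟨l, hl, rfl⟩ := Subgroup.exists_list_of_mem_commutator hx
  have hfst : ∀ x ∈ l.map Prod.fst, x ∈ H := List.forall_mem_map.2 fun p hp => (hl p hp).1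
  have hsnd : ∀ x ∈ l.map Prod.snd, x ∈ H := List.forall_mem_map.2 fun p hp => (hl p hp).2
  have hcomm : ∀ x ∈ l.map fun p => ⁅p.1, p.2⁆, x ∈ H := List.forall_mem_map.2 fun p hp =>
    H.commutator_le_self (Subgroup.commutator_mem_commutator (hl p hp).1 (hl p hp).2)
  obtain ⟨u, hu⟩ := hφ.list_prod_eq_twistedProd_mul hcomm
  refine ⟨twistedProd (φ ^ 2) (l.map Prod.fst), twistedProd (φ ^ 2) (l.map Prod.snd), u, ?_⟩
  have hodd : Commute (φ (twistedProd (φ ^ 2) (l.map Prod.fst)))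
      (twistedProd (φ ^ 2) (l.map Prod.snd)) := by
    simpa using hφ.commute_pow_twistedProd_pow_twistedProd hfst hsnd (i := 1) (j := 0) (by simp)
  rw [hu, commutatorElement_mul_inv_of_commute _ hodd, hφ.commutatorElement_twistedProd l hl]

end StronglyDisplaces

namespace IsConjInvariantNorm

variable {ν : G → ℝ}

theorem commutatorElement_le_left (hν : IsConjInvariantNorm ν) (x y : G) :
    ν ⁅x, y⁆ ≤ 2 * ν x := by
  obtain ⟨-, -, hinv, hmul, hconj⟩ := hν
  have := hmul x (y * x⁻¹ * y⁻¹)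
  rw [hconj, hinv, ← mul_assoc, ← mul_assoc, ← commutatorElement_def] at this
  linarith

theorem commutatorElement_le_right (hν : IsConjInvariantNorm ν) (x y : G) :
    ν ⁅x, y⁆ ≤ 2 * ν y := by
  rw [← hν.2.2.1, commutatorElement_inv]
  exact hν.commutatorElement_le_left y x

theorem pow_two_le (hν : IsConjInvariantNorm ν) (g : G) : ν (g ^ 2) ≤ 2 * ν g := by
  rw [pow_two, two_mul]
  exact hν.2.2.2.1 g g

end IsConjInvariantNorm

theorem toMonoidEnd_conj_pow_apply (g a : G) (i : ℕ) :
    (MulDistribMulAction.toMonoidEnd (MulAut G) G (MulAut.conj g) ^ i) a =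
      g ^ i * a * (g ^ i)⁻¹ := by
  rw [← map_pow, ← map_pow, MulDistribMulAction.toMonoidEnd_apply]
  rfl

theorem StronglyDisplaces.exists_eq_commutatorElement_commutatorElement_mul {g : G}
    {H : Subgroup G} (hg : StronglyDisplaces (MulDistribMulAction.toMonoidEnd (MulAut G) G
      (MulAut.conj g)) H) {x : G} (hx : x ∈ ⁅H, H⁆) :
    ∃ A B u : G, x = ⁅⁅A, g⁆, B⁆ * ⁅u, g ^ 2⁆ := by
  obtain ⟨A, B, u, rfl⟩ := hg.exists_eq_commutatorElement_mul hx
  refine ⟨A, B, u, ?_⟩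
  rw [toMonoidEnd_conj_pow_apply,
    show MulDistribMulAction.toMonoidEnd (MulAut G) G (MulAut.conj g) A = g * A * g⁻¹ from rfl]
  simp only [commutatorElement_def, mul_inv_rev, inv_inv, mul_assoc]

end

theorem norm_le_of_displaceable {G : Type*} [Group G] (ν : G → ℝ)
    (hν : IsConjInvariantNorm ν) (H : Subgroup G) (g : G)
    (hdisp : ∀ m : ℕ, 1 ≤ m → ∀ i j : ℕ, i ≤ m → j ≤ m → i ≠ j →
      ∀ a b : G, a ∈ H → b ∈ H →
        Commute (g ^ i * a * (g ^ i)⁻¹) (g ^ j * b * (g ^ j)⁻¹)) :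
    ∀ h ∈ ⁅H, H⁆, ν h ≤ 14 * ν g := by
  intro h hh
  have hg : StronglyDisplaces (MulDistribMulAction.toMonoidEnd (MulAut G) G (MulAut.conj g)) H :=
    fun i j hij a ha b hb => by
      simpa only [toMonoidEnd_conj_pow_apply] using
        hdisp (max i j) (by omega) i j (le_max_left i j) (le_max_right i j) hij a b ha hb
  obtain ⟨A, B, u, rfl⟩ := hg.exists_eq_commutatorElement_commutatorElement_mul hh
  calc ν (⁅⁅A, g⁆, B⁆ * ⁅u, g ^ 2⁆) ≤ ν ⁅⁅A, g⁆, B⁆ + ν ⁅u, g ^ 2⁆ := hν.2.2.2.1 _ _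
    _ ≤ 2 * ν ⁅A, g⁆ + 2 * ν (g ^ 2) :=
        add_le_add (hν.commutatorElement_le_left _ _) (hν.commutatorElement_le_right _ _)
    _ ≤ 2 * (2 * ν g) + 2 * (2 * ν g) := by
        gcongr
        exacts [hν.commutatorElement_le_right A g, hν.pow_two_le g]
    _ ≤ 14 * ν g := by linarith [hν.1 g]
end

section
/- Every compactly supported homeomorphism g of ℝⁿ is isotopic to the identity via the Alexander isotopy: g_t(x) = t·g(x/t) for t ∈ (0,1] and g_0 = id defines a continuous family of homeomorphisms of ℝⁿ with g_1 = g and g_0 = id. -/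
/-!
Conjugating `g` by the dilation `x ↦ t • x` gives homeomorphisms `g_t` whose displacement
`‖g_t x - x‖ = ‖t‖ ‖g (t⁻¹ • x) - t⁻¹ • x‖` is at most `‖t‖` times the (finite, by compactness of
the support) supremum of `‖g y - y‖`. Hence `g_t → id` uniformly as `t → 0`, which gives joint
continuity at `t = 0`; away from `t = 0` continuity is clear from the formula.
-/

open Filter Topology

section AlexanderIsotopy

variable {𝕜 E : Type*} [NormedField 𝕜] [NormedAddCommGroup E] [NormedSpace 𝕜 E]

open Classical in
variable (𝕜) in
noncomputable def alexanderIsotopy (g : E → E) (p : 𝕜 × E) : E :=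
  if p.1 = 0 then p.2 else p.1 • g (p.1⁻¹ • p.2)

@[simp]
theorem alexanderIsotopy_zero (g : E → E) (x : E) : alexanderIsotopy 𝕜 g (0, x) = x := by
  simp [alexanderIsotopy]

theorem alexanderIsotopy_of_ne_zero (g : E → E) {t : 𝕜} (ht : t ≠ 0) (x : E) :
    alexanderIsotopy 𝕜 g (t, x) = t • g (t⁻¹ • x) := by
  simp [alexanderIsotopy, ht]

theorem exists_norm_sub_le_of_isCompact_closure {g : E → E} (hg : Continuous g)
    (hsupp : IsCompact (closure {x | g x ≠ x})) : ∃ C, ∀ y, ‖g y - y‖ ≤ C := by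
  have hdisp : HasCompactSupport (g - id) := by
    simpa only [HasCompactSupport, tsupport, Function.support, Pi.sub_apply, id, sub_ne_zero]
      using hsupp
  exact (hg.sub continuous_id).bounded_above_of_compact_support hdisp

theorem norm_alexanderIsotopy_sub_le {g : E → E} {C : ℝ} (hC : ∀ y, ‖g y - y‖ ≤ C)
    (t : 𝕜) (x : E) : ‖alexanderIsotopy 𝕜 g (t, x) - x‖ ≤ ‖t‖ * C := by
  rcases eq_or_ne t 0 with rfl | ht
  · simp
  · calc ‖alexanderIsotopy 𝕜 g (t, x) - x‖ = ‖t • (g (t⁻¹ • x) - t⁻¹ • x)‖ := by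
          rw [alexanderIsotopy_of_ne_zero g ht, smul_sub, smul_inv_smul₀ ht]
      _ ≤ ‖t‖ * C := by
          rw [norm_smul]
          exact mul_le_mul_of_nonneg_left (hC _) (norm_nonneg t)

theorem continuousAt_alexanderIsotopy_zero {g : E → E} {C : ℝ} (hC : ∀ y, ‖g y - y‖ ≤ C)
    (x : E) : ContinuousAt (alexanderIsotopy 𝕜 g) (0, x) := by
  have hdisp : Tendsto (fun p : 𝕜 × E ↦ alexanderIsotopy 𝕜 g p - p.2) (𝓝 (0, x)) (𝓝 0) := by
    refine squeeze_zero_norm (fun p ↦ norm_alexanderIsotopy_sub_le hC p.1 p.2) ?_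
    simpa using (continuous_fst.norm.mul_const C).tendsto ((0 : 𝕜), x)
  simpa [ContinuousAt] using hdisp.add (continuous_snd.tendsto ((0 : 𝕜), x))

theorem continuousAt_alexanderIsotopy_of_ne_zero {g : E → E} (hg : Continuous g) {t : 𝕜}
    (ht : t ≠ 0) (x : E) : ContinuousAt (alexanderIsotopy 𝕜 g) (t, x) := by
  have hdil : ContinuousAt (fun p : 𝕜 × E ↦ p.1 • g (p.1⁻¹ • p.2)) (t, x) :=
    continuousAt_fst.smul
      (hg.continuousAt.comp ((continuousAt_fst.inv₀ ht).smul continuousAt_snd))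
  refine hdil.congr ?_
  filter_upwards [continuous_fst.continuousAt.eventually_ne ht] with p hp
  exact (alexanderIsotopy_of_ne_zero g hp p.2).symm

theorem continuous_alexanderIsotopy {g : E → E} (hg : Continuous g) {C : ℝ}
    (hC : ∀ y, ‖g y - y‖ ≤ C) : Continuous (alexanderIsotopy 𝕜 g) := by
  refine continuous_iff_continuousAt.2 fun ⟨t, x⟩ ↦ ?_
  rcases eq_or_ne t 0 with rfl | ht
  · exact continuousAt_alexanderIsotopy_zero hC x
  · exact continuousAt_alexanderIsotopy_of_ne_zero hg ht x

theorem exists_homeomorph_eq_alexanderIsotopy (g : E ≃ₜ E) (t : 𝕜) :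
    ∃ h : E ≃ₜ E, ∀ x, h x = alexanderIsotopy 𝕜 g (t, x) := by
  rcases eq_or_ne t 0 with rfl | ht
  · exact ⟨Homeomorph.refl E, fun x ↦ (alexanderIsotopy_zero g x).symm⟩
  · refine ⟨((Homeomorph.smulOfNeZero t ht).symm.trans g).trans (Homeomorph.smulOfNeZero t ht),
      fun x ↦ ?_⟩
    simp [alexanderIsotopy_of_ne_zero _ ht, Homeomorph.smulOfNeZero_symm_apply]

end AlexanderIsotopy

theorem alexander_isotopy (n : ℕ) (g : (Fin n → ℝ) ≃ₜ (Fin n → ℝ))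
    (hg : IsCompact (closure {x | g x ≠ x}))
    (F : ℝ × (Fin n → ℝ) → (Fin n → ℝ))
    (hF : ∀ t x, F (t, x) = if t = 0 then x else t • g (t⁻¹ • x)) :
    ContinuousOn F (Set.Icc (0 : ℝ) 1 ×ˢ (Set.univ : Set (Fin n → ℝ))) ∧
      (∀ x, F (1, x) = g x) ∧ (∀ x, F (0, x) = x) ∧
      ∀ t ∈ Set.Icc (0 : ℝ) 1, ∃ h : (Fin n → ℝ) ≃ₜ (Fin n → ℝ), ∀ x, h x = F (t, x) := by
  have hF_eq : F = alexanderIsotopy ℝ g := funext fun ⟨t, x⟩ ↦ by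
    rw [hF, alexanderIsotopy]
  obtain ⟨C, hC⟩ := exists_norm_sub_le_of_isCompact_closure g.continuous hg
  subst hF_eq
  exact ⟨(continuous_alexanderIsotopy g.continuous hC).continuousOn,
    fun x ↦ by simp [alexanderIsotopy_of_ne_zero], alexanderIsotopy_zero g,
    fun t _ ↦ exists_homeomorph_eq_alexanderIsotopy g t⟩
end

section
/- An abelian group is bounded (every conjugation-invariant norm is bounded) if and only if it is finite. -/
/-!
Pulling back along a surjective homomorphism preserves unboundedness, and adding the discrete
norm turns a seminorm into a norm, so it suffices to find an unbounded group seminorm on an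
infinite abelian group `A`, written additively.

If some `a : A` has infinite order, `n • a ↦ n` extends to a homomorphism `A → ℚ` because `ℚ` is
divisible, hence injective; its absolute value is unbounded. If `A` is torsion of exponent `0`,
`log ∘ addOrderOf` is subadditive because the order of `a + b` divides the product of the
orders. If `A` has exponent `m ≠ 0`, induction over the prime factors of `m` (`pA` has exponent
`m / p`) shows that some `A ⧸ pA` is infinite. It is an infinite-dimensional `ZMod p`-vector
space; numbering countably many basis vectors by `ℕ`, the largest number occurring in the support
of the coordinates of a vector is an unbounded seminorm.
-/

open Function Set

namespace AddGroupSeminorm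

variable {E F : Type*} [AddGroup E] [AddGroup F]

theorem not_bddAbove_range_comp {p : AddGroupSeminorm E} (hp : ¬BddAbove (range p))
    {f : F →+ E} (hf : Surjective f) : ¬BddAbove (range (p.comp f)) := by
  rwa [coe_comp, hf.range_comp]

def toMul {G : Type*} [Group G] (p : AddGroupSeminorm (Additive G)) : GroupSeminorm G where
  toFun g := p (Additive.ofMul g)
  map_one' := p.map_zero'
  mul_le' _ _ := p.add_le' _ _
  inv' _ := p.neg' _

end AddGroupSeminorm

theorem GroupSeminorm.isConjInvariantNorm_add_one {G : Type*} [CommGroup G] [DecidableEq G]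
    (p : GroupSeminorm G) : IsConjInvariantNorm ⇑(p + 1) := by
  refine ⟨apply_nonneg _, fun g => ?_, map_inv_eq_map _, map_mul_le_add _,
    fun g h => by rw [mul_inv_cancel_comm]⟩
  by_cases hg : g = 1
  · simp [hg]
  · simp only [add_apply, apply_one, hg, if_false, ne_eq, not_false_eq_true, iff_true]
    linarith [apply_nonneg p g]

theorem AddCommGroup.exists_addMonoidHom_rat_apply_eq_one {A : Type*} [AddCommGroup A] {a : A}
    (ha : ¬IsOfFinAddOrder a) : ∃ f : A →+ ℚ, f a = 1 := by
  obtain ⟨f, hf⟩ := (Module.Baer.of_divisible ℚ).extension_property_addMonoidHom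
    (zmultiplesHom A a) (injective_zsmul_iff_not_isOfFinAddOrder.2 ha) (Int.castAddHom ℚ)
  exact ⟨f, by simpa using DFunLike.congr_fun hf 1⟩

theorem AddCommGroup.exists_unbounded_addGroupSeminorm_of_not_isOfFinAddOrder {A : Type*}
    [AddCommGroup A] {a : A} (ha : ¬IsOfFinAddOrder a) :
    ∃ p : AddGroupSeminorm A, ¬BddAbove (range p) := by
  obtain ⟨f, hfa⟩ := exists_addMonoidHom_rat_apply_eq_one ha
  refine ⟨(normAddGroupSeminorm ℚ).comp f, fun ⟨C, hC⟩ => ?_⟩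
  obtain ⟨n, hn⟩ := exists_nat_gt C
  have : (n : ℝ) ≤ C := by simpa [hfa, ← Rat.norm_cast_real] using hC ⟨n • a, rfl⟩
  linarith

namespace IsAddTorsion

variable {A : Type*} [AddCommGroup A]

noncomputable def logAddOrderOf (hA : IsAddTorsion A) : AddGroupSeminorm A where
  toFun a := Real.log (addOrderOf a)
  map_zero' := by simp
  add_le' a b := by
    have ha := (hA a).addOrderOf_pos
    have hb := (hA b).addOrderOf_pos
    rw [← Real.log_mul (by positivity) (by positivity)]
    gcongr
    · exact_mod_cast (hA (a + b)).addOrderOf_pos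
    · exact_mod_cast Nat.le_of_dvd (by positivity)
        ((AddCommute.all a b).addOrderOf_add_dvd_lcm.trans (Nat.lcm_dvd_mul _ _))
  neg' a := by simp

theorem not_bddAbove_range_logAddOrderOf (hA : IsAddTorsion A) (hexp : AddMonoid.exponent A = 0) :
    ¬BddAbove (range hA.logAddOrderOf) := by
  rintro ⟨C, hC⟩
  refine (AddMonoid.exponent_ne_zero_iff_range_addOrderOf_finite fun a =>
    (hA a).addOrderOf_pos).2 ?_ hexp
  refine finite_iff_bddAbove.2 ⟨⌈Real.exp C⌉₊, forall_mem_range.2 fun a => ?_⟩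
  have hlog : Real.log (addOrderOf a) ≤ C := hC ⟨a, rfl⟩
  rw [Real.log_le_iff_le_exp (by exact_mod_cast (hA a).addOrderOf_pos)] at hlog
  exact_mod_cast hlog.trans (Nat.le_ceil _)

end IsAddTorsion

namespace Finsupp

variable {ι R : Type*} [AddGroup R]

def supSupportSeminorm (c : ι → ℕ) : AddGroupSeminorm (ι →₀ R) where
  toFun f := (f.support.sup c : ℕ)
  map_zero' := by simp
  add_le' f g := by
    classical
    have := Finset.sup_mono (f := c) (support_add (g₁ := f) (g₂ := g))
    rw [Finset.sup_union] at this
    exact_mod_cast this.trans (max_le_add_of_nonneg (Nat.zero_le _) (Nat.zero_le _))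
  neg' f := by simp

theorem supSupportSeminorm_single (c : ι → ℕ) (i : ι) {r : R} (hr : r ≠ 0) :
    supSupportSeminorm c (single i r) = c i := by
  show (((single i r).support.sup c : ℕ) : ℝ) = c i
  simp [hr]

end Finsupp

theorem Module.exists_unbounded_addGroupSeminorm_of_infinite {K V : Type*} [DivisionRing K]
    [Finite K] [AddCommGroup V] [Module K V] [Infinite V] :
    ∃ p : AddGroupSeminorm V, ¬BddAbove (range p) := by
  let b := Basis.ofVectorSpace K V
  have : Infinite (Basis.ofVectorSpaceIndex K V) := by
    by_contra!
    have := Module.Finite.of_basis b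
    exact not_finite_iff_infinite.2 ‹Infinite V› (Module.finite_of_finite K)
  let u := Infinite.natEmbedding (Basis.ofVectorSpaceIndex K V)
  let c := invFun u
  have hc : ∀ n, c (u n) = n := leftInverse_invFun u.injective
  refine ⟨(Finsupp.supSupportSeminorm c).comp b.repr.toAddMonoidHom,
    AddGroupSeminorm.not_bddAbove_range_comp (fun ⟨C, hC⟩ => ?_) b.repr.surjective⟩
  obtain ⟨n, hn⟩ := exists_nat_gt C
  have := hC ⟨Finsupp.single (u n) 1, rfl⟩
  rw [Finsupp.supSupportSeminorm_single _ _ one_ne_zero, hc] at this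
  linarith

theorem AddMonoidHom.finite_quotient_range_nsmul_of_surjective {A B : Type*} [AddCommGroup A]
    [AddCommGroup B] {f : A →+ B} (hf : Surjective f) (n : ℕ)
    [Finite (A ⧸ (nsmulAddMonoidHom n : A →+ A).range)] :
    Finite (B ⧸ (nsmulAddMonoidHom n : B →+ B).range) := by
  refine Finite.of_surjective _ (QuotientAddGroup.map_surjective_of_surjective
    (nsmulAddMonoidHom n : A →+ A).range (nsmulAddMonoidHom n : B →+ B).range f
    (QuotientAddGroup.mk_surjective.comp hf) ?_)
  rintro _ ⟨a, rfl⟩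
  exact ⟨f a, by simp⟩

theorem AddCommGroup.finite_of_nsmul_eq_zero_of_finite_quotient {A : Type*} [AddCommGroup A]
    {m : ℕ} (hm : m ≠ 0) (hA : ∀ a : A, m • a = 0)
    (hquot : ∀ p, p.Prime → Finite (A ⧸ (nsmulAddMonoidHom p : A →+ A).range)) : Finite A := by
  induction m using induction_on_primes generalizing A with
  | zero => exact absurd rfl hm
  | one =>
    have : Subsingleton A := ⟨fun a b => by simpa using (hA a).trans (hA b).symm⟩
    exact Finite.of_subsingleton
  | prime_mul p k hp ih =>
    have hrange : Finite (nsmulAddMonoidHom p : A →+ A).range := by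
      refine ih (right_ne_zero_of_mul hm) (fun ⟨_, a, ha⟩ => ?_) fun q hq => ?_
      · subst ha
        ext
        simp [smul_smul, mul_comm k p, hA]
      · have := hquot q hq
        exact AddMonoidHom.finite_quotient_range_nsmul_of_surjective
          (AddMonoidHom.rangeRestrict_surjective _) q
    have := hquot p hp
    exact (AddSubgroup.finite_iff_finite_and_finiteIndex _).2
      ⟨hrange, AddSubgroup.finiteIndex_of_finite_quotient⟩

theorem AddCommGroup.exists_unbounded_addGroupSeminorm_of_exponent_ne_zero {A : Type*}
    [AddCommGroup A] [Infinite A] (hexp : AddMonoid.exponent A ≠ 0) :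
    ∃ p : AddGroupSeminorm A, ¬BddAbove (range p) := by
  obtain ⟨p, hp, hinf⟩ : ∃ p, p.Prime ∧ Infinite (A ⧸ (nsmulAddMonoidHom p : A →+ A).range) := by
    by_contra! h
    have := finite_of_nsmul_eq_zero_of_finite_quotient hexp AddMonoid.exponent_nsmul_eq_zero h
    exact not_finite A
  let N := (nsmulAddMonoidHom p : A →+ A).range
  let : Module (ZMod p) (A ⧸ N) := AddCommGroup.zmodModule fun x =>
    QuotientAddGroup.induction_on x fun a => (QuotientAddGroup.eq_zero_iff _).2 ⟨a, rfl⟩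
  have : Fact p.Prime := ⟨hp⟩
  obtain ⟨μ, hμ⟩ :=
    Module.exists_unbounded_addGroupSeminorm_of_infinite (K := ZMod p) (V := A ⧸ N)
  exact ⟨μ.comp (QuotientAddGroup.mk' N),
    AddGroupSeminorm.not_bddAbove_range_comp hμ (QuotientAddGroup.mk'_surjective N)⟩

theorem AddCommGroup.exists_unbounded_addGroupSeminorm (A : Type*) [AddCommGroup A]
    [Infinite A] : ∃ p : AddGroupSeminorm A, ¬BddAbove (range p) := by
  by_cases htors : IsAddTorsion A
  · by_cases hexp : AddMonoid.exponent A = 0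
    · exact ⟨_, htors.not_bddAbove_range_logAddOrderOf hexp⟩
    · exact exists_unbounded_addGroupSeminorm_of_exponent_ne_zero hexp
  · obtain ⟨a, ha⟩ := not_forall.1 htors
    exact exists_unbounded_addGroupSeminorm_of_not_isOfFinAddOrder ha

/-- An abelian group is bounded if and only if it is finite. -/
theorem abelian_bounded_iff_finite (G : Type*) [CommGroup G] :
    (∀ ν : G → ℝ, IsConjInvariantNorm ν → ∃ C, ∀ g, ν g ≤ C) ↔ Finite G := by
  refine ⟨fun hbdd => ?_, fun _ ν _ => ?_⟩
  · by_contra hinf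
    have := not_finite_iff_infinite.1 hinf
    classical
    obtain ⟨p, hp⟩ := AddCommGroup.exists_unbounded_addGroupSeminorm (Additive G)
    obtain ⟨C, hC⟩ := hbdd _ p.toMul.isConjInvariantNorm_add_one
    refine hp ⟨C, forall_mem_range.2 fun g => le_trans ?_ (hC (Additive.toMul g))⟩
    exact le_add_of_nonneg_right (apply_nonneg _ _)
  · obtain ⟨g₀, hg₀⟩ := Finite.exists_max ν
    exact ⟨ν g₀, hg₀⟩
end

section
/- Let M be a topological space, U and V disjoint open subsets, and f a homeomorphism of M such that the closure of f(U ∪ V) is contained in V. Then the sets f^k(U), k ≥ 1, are pairwise disjoint; consequently f strongly m-displaces the group of homeomorphisms supported in U for every m ≥ 1, i.e., the subgroups f^j H_U f^{-j}, j = 0,…,m, pairwise commute, where H_U is the group of homeomorphisms of M supported in U. -/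
/-- The group of self-homeomorphisms of `M`, under composition. -/
instance homeoGroup {M : Type*} [TopologicalSpace M] : Group (M ≃ₜ M) where
  mul f g := g.trans f
  one := Homeomorph.refl M
  inv := Homeomorph.symm
  mul_assoc _ _ _ := rfl
  one_mul _ := rfl
  mul_one _ := rfl
  inv_mul_cancel f := by ext x; exact f.symm_apply_apply x

/-- The support of a homeomorphism: closure of the set of non-fixed points. -/
def homeoSupport {M : Type*} [TopologicalSpace M] (h : M ≃ₜ M) : Set M :=
  closure {x | h x ≠ x}

/-!
Since `f` maps `U` and `V` into `V`, every `f^d(U)` with `d ≥ 1` lies in `V`, so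
`f^(k+d)(U) ⊆ f^k(V)` is disjoint from `f^k(U)`. Conjugating by `f^i` carries the support of
an element of `H_U` into `f^i(U)`, and homeomorphisms with disjoint supports commute.
-/

open Set Function

theorem pairwise_disjoint_iterate_image {α : Type*} {g : α → α} (hg : Injective g)
    {U V : Set α} (hUV : Disjoint U V) (hgU : MapsTo g U V) (hgV : MapsTo g V V) :
    Pairwise (Disjoint on fun n => g^[n] '' U) := by
  refine (pairwise_disjoint_on _).2 fun k l hkl => ?_
  obtain ⟨d, rfl⟩ := Nat.exists_eq_add_of_lt hkl
  have hmaps : MapsTo g^[d + 1] U V := by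
    rw [iterate_succ]
    exact (hgV.iterate d).comp hgU
  rw [add_assoc, iterate_add, image_comp]
  exact (disjoint_image_iff (hg.iterate k)).2 hUV |>.mono_right (image_mono hmaps.image_subset)

section Homeomorph

variable {M : Type*} [TopologicalSpace M]

theorem Homeomorph.coe_pow (f : M ≃ₜ M) (n : ℕ) : ⇑(f ^ n) = (⇑f)^[n] := by
  induction n with
  | zero => rfl
  | succ n ih => rw [pow_succ, iterate_succ, ← ih]; rfl

theorem apply_eq_of_notMem_homeoSupport {c : M ≃ₜ M} {x : M} (hx : x ∉ homeoSupport c) :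
    c x = x :=
  not_not.1 fun h => hx (subset_closure h)

theorem apply_mem_homeoSupport_iff {c : M ≃ₜ M} {x : M} :
    c x ∈ homeoSupport c ↔ x ∈ homeoSupport c := by
  have hinv : c ⁻¹' {x | c x ≠ x} = {x | c x ≠ x} := ext fun x => c.injective.ne_iff
  rw [← mem_preimage, homeoSupport, c.preimage_closure, hinv]

theorem homeoSupport_conj (g a : M ≃ₜ M) :
    homeoSupport (g * a * g⁻¹) = g '' homeoSupport a := by
  have hmoved : {x | (g * a * g⁻¹) x ≠ x} = g '' {x | a x ≠ x} := by
    rw [g.image_eq_preimage_symm]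
    ext x
    change g (a (g.symm x)) ≠ x ↔ a (g.symm x) ≠ g.symm x
    exact not_congr g.eq_symm_apply.symm
  rw [homeoSupport, homeoSupport, hmoved, g.image_closure]

theorem apply_apply_comm_of_mem_homeoSupport {a b : M ≃ₜ M}
    (h : Disjoint (homeoSupport a) (homeoSupport b)) {x : M} (hx : x ∈ homeoSupport a) :
    a (b x) = b (a x) := by
  rw [apply_eq_of_notMem_homeoSupport (h.notMem_of_mem_left hx),
    apply_eq_of_notMem_homeoSupport
      (h.notMem_of_mem_left (apply_mem_homeoSupport_iff.2 hx))]

theorem Commute.of_disjoint_homeoSupport {a b : M ≃ₜ M}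
    (h : Disjoint (homeoSupport a) (homeoSupport b)) : Commute a b := by
  refine Homeomorph.ext fun x => ?_
  change a (b x) = b (a x)
  by_cases hxa : x ∈ homeoSupport a
  · exact apply_apply_comm_of_mem_homeoSupport h hxa
  by_cases hxb : x ∈ homeoSupport b
  · exact (apply_apply_comm_of_mem_homeoSupport h.symm hxb).symm
  rw [apply_eq_of_notMem_homeoSupport hxb, apply_eq_of_notMem_homeoSupport hxa,
    apply_eq_of_notMem_homeoSupport hxb]

end Homeomorph

theorem displacement_general (M : Type*) [TopologicalSpace M] (U V : Set M)
    (hUV : Disjoint U V)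
    (f : M ≃ₜ M) (hf : closure (f '' (U ∪ V)) ⊆ V) :
    (∀ k l : ℕ, 1 ≤ k → 1 ≤ l → k ≠ l →
      Disjoint ((f ^ k : M ≃ₜ M) '' U) ((f ^ l : M ≃ₜ M) '' U)) ∧
    (∀ m : ℕ, 1 ≤ m → ∀ i j : ℕ, i ≤ m → j ≤ m → i ≠ j →
      ∀ a b : M ≃ₜ M, homeoSupport a ⊆ U → homeoSupport b ⊆ U →
        Commute (f ^ i * a * (f ^ i)⁻¹) (f ^ j * b * (f ^ j)⁻¹)) := by
  have hfUV : MapsTo f (U ∪ V) V :=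
    mapsTo_iff_image_subset.2 (subset_closure.trans hf)
  have hdisj : Pairwise (Disjoint on fun n => (f ^ n : M ≃ₜ M) '' U) := by
    simpa only [Homeomorph.coe_pow] using pairwise_disjoint_iterate_image f.injective hUV
      (hfUV.mono_left subset_union_left) (hfUV.mono_left subset_union_right)
  refine ⟨fun k l _ _ hkl => hdisj hkl, fun m _ i j _ _ hij a b ha hb => ?_⟩
  apply Commute.of_disjoint_homeoSupport
  rw [homeoSupport_conj, homeoSupport_conj]
  exact (hdisj hij).mono (image_mono ha) (image_mono hb)

theorem displacement (M : Type*) [TopologicalSpace M] (U V : Set M)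
    (hU : IsOpen U) (hV : IsOpen V) (hUV : Disjoint U V)
    (f : M ≃ₜ M) (hf : closure (f '' (U ∪ V)) ⊆ V) :
    (∀ k l : ℕ, 1 ≤ k → 1 ≤ l → k ≠ l →
      Disjoint ((f ^ k : M ≃ₜ M) '' U) ((f ^ l : M ≃ₜ M) '' U)) ∧
    (∀ m : ℕ, 1 ≤ m → ∀ i j : ℕ, i ≤ m → j ≤ m → i ≠ j →
      ∀ a b : M ≃ₜ M, homeoSupport a ⊆ U → homeoSupport b ⊆ U →
        Commute (f ^ i * a * (f ^ i)⁻¹) (f ^ j * b * (f ^ j)⁻¹)) :=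
  displacement_general M U V hUV f hf
end
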